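/- A group G is commutative if and only if every subgroup of the product group G × G is a normal subgroup of G × G. -/

import Mathlib

/-! The diagonal `{(g, g)}` is normal in `G × G` only if `G` is commutative: conjugating `(b, b)`
by `(a, 1)` gives `(a * b * a⁻¹, b)`. Conversely, `G × G` is commutative whenever `G` is. -/

namespace Subgroup

variable {G : Type*} [Group G]

def diagonal (G : Type*) [Group G] : Subgroup (G × G) :=
  (MonoidHom.fst G G).eqLocus (MonoidHom.snd G G)

theorem mem_diagonal {p : G × G} : p ∈ diagonal G ↔ p.1 = p.2 := Iff.rfl

theorem isMulCommutative_of_diagonal_normal (h : (diagonal G).Normal) : IsMulCommutative G := by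
  refine isMulCommutative_iff.mpr fun a b => ?_
  have hconj : ((a, 1) * (b, b) * (a, 1)⁻¹ : G × G) ∈ diagonal G :=
    h.conj_mem _ (mem_diagonal.mpr rfl) _
  simp only [mem_diagonal, Prod.fst_mul, Prod.snd_mul, Prod.fst_inv, Prod.snd_inv, one_mul,
    inv_one, mul_one, mul_inv_eq_iff_eq_mul] at hconj
  exact hconj

end Subgroup

/-- A group `G` is commutative iff every subgroup of the product group `G × G`
is a normal subgroup of `G × G`. -/
theorem comm_iff_all_subgroups_of_square_normal {G : Type*} [Group G] :
    (∀ a b : G, a * b = b * a) ↔ ∀ S : Subgroup (G × G), S.Normal := by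
  rw [← isMulCommutative_iff]
  refine ⟨fun _ S => inferInstance, fun h => ?_⟩
  exact Subgroup.isMulCommutative_of_diagonal_normal (h _)
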